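/- arXiv:1906.00395 — 4 statements merged into one kernel-verified Lean document; each statement's English description precedes it below -/
import Mathlib

section
/- Let (X, p) be a partial metric space. Define G_p(x,y,z) = p(x,y) + p(y,z) + p(x,z) - p(x,x) - p(y,y) - p(z,z) for all x,y,z ∈ X. Then (X, G_p) is a G-metric space which is symmetric, i.e., G_p(x,y,y) = G_p(y,x,x) for all x,y ∈ X. -/
open Filter Topology

/-- A partial metric (Matthews): P1–P4, nonnegative real-valued. -/
def IsPartialMetric {X : Type*} (p : X → X → ℝ) : Prop :=
  (∀ x y, 0 ≤ p x y) ∧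
  (∀ x y, x = y ↔ (p x x = p x y ∧ p x y = p y y)) ∧
  (∀ x y, p x x ≤ p x y) ∧
  (∀ x y, p x y = p y x) ∧
  (∀ x y z, p x z ≤ p x y + p y z - p y y)

/-- A G-metric (Mustafa–Sims): G1–G5, nonnegative real-valued. -/
def IsGMetric {X : Type*} (G : X → X → X → ℝ) : Prop :=
  (∀ x y z, 0 ≤ G x y z) ∧
  (∀ x, G x x x = 0) ∧
  (∀ x y, x ≠ y → 0 < G x x y) ∧
  (∀ x y z, z ≠ y → G x x y ≤ G x y z) ∧
  (∀ x y z, G x y z = G y x z ∧ G x y z = G x z y) ∧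
  (∀ x y z a, G x y z ≤ G x a a + G a y z)

/-- A GP-metric (Zand–Nezhad): GP1–GP4, nonnegative real-valued. -/
def IsGPMetric {X : Type*} (G : X → X → X → ℝ) : Prop :=
  (∀ x y z, 0 ≤ G x y z) ∧
  (∀ x y z, G x x x ≤ G x x y ∧ G x x y ≤ G x y z) ∧
  (∀ x y z, G x y z = G y x z ∧ G x y z = G x z y) ∧
  (∀ x y z a, G x y z ≤ G x a a + G a y z - G a a a) ∧
  (∀ x y z, G x y z = G x x x → G x y z = G y y y → G x y z = G z z z → x = y ∧ y = z)

/-- Cauchy sequence in a partial metric space: lim_{n,m} p(x_n,x_m) exists (finite). -/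
def PCauchy {X : Type*} (p : X → X → ℝ) (s : ℕ → X) : Prop :=
  ∃ a : ℝ, Tendsto (fun nm : ℕ × ℕ => p (s nm.1) (s nm.2)) atTop (nhds a)

/-- Completeness of a partial metric space. -/
def PComplete {X : Type*} (p : X → X → ℝ) : Prop :=
  ∀ s : ℕ → X, PCauchy p s → ∃ x : X,
    Tendsto (fun nm : ℕ × ℕ => p (s nm.1) (s nm.2)) atTop (nhds (p x x))

/-- G-Cauchy sequence in a G-metric space. -/
def GCauchy {X : Type*} (G : X → X → X → ℝ) (s : ℕ → X) : Prop :=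
  ∀ ε : ℝ, 0 < ε → ∃ k : ℕ, ∀ n ≥ k, ∀ m ≥ k, ∀ l ≥ k, G (s n) (s m) (s l) < ε

/-- G-convergence in a G-metric space. -/
def GConvergesTo {X : Type*} (G : X → X → X → ℝ) (s : ℕ → X) (x : X) : Prop :=
  ∀ ε : ℝ, 0 < ε → ∃ k : ℕ, ∀ n ≥ k, ∀ m ≥ k, G x (s n) (s m) < ε

/-- G-completeness. -/
def GComplete {X : Type*} (G : X → X → X → ℝ) : Prop :=
  ∀ s : ℕ → X, GCauchy G s → ∃ x : X, GConvergesTo G s x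

/-- GP-Cauchy sequence: lim_{n,m} GP(x_n,x_m,x_m) exists (finite). -/
def GPCauchy {X : Type*} (G : X → X → X → ℝ) (s : ℕ → X) : Prop :=
  ∃ a : ℝ, Tendsto (fun nm : ℕ × ℕ => G (s nm.1) (s nm.2) (s nm.2)) atTop (nhds a)

/-- GP-convergence of a sequence to a point. -/
def GPConvergesTo {X : Type*} (G : X → X → X → ℝ) (s : ℕ → X) (x : X) : Prop :=
  Tendsto (fun n => G (s n) (s n) (s n)) atTop (nhds (G x x x)) ∧
  Tendsto (fun n => G x x (s n)) atTop (nhds (G x x x))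

/-- GP-completeness. -/
def GPComplete {X : Type*} (G : X → X → X → ℝ) : Prop :=
  ∀ s : ℕ → X, GPCauchy G s → ∃ x : X, GPConvergesTo G s x ∧
    Tendsto (fun nm : ℕ × ℕ => G (s nm.1) (s nm.2) (s nm.2)) atTop (nhds (G x x x))

/-- The topology generated by the open GP-balls. -/
def GPTopology {X : Type*} (G : X → X → X → ℝ) : TopologicalSpace X :=
  TopologicalSpace.generateFrom
    { s | ∃ (x₀ : X) (ε : ℝ), 0 < ε ∧ s = { y | G x₀ y y < ε + G x₀ x₀ x₀ } }

def gMetricOf {X : Type*} (p : X → X → ℝ) (x y z : X) : ℝ :=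
  p x y + p y z + p x z - p x x - p y y - p z z

namespace IsPartialMetric

variable {X : Type*} {p : X → X → ℝ}

theorem self_le_left (hp : IsPartialMetric p) (x y : X) : p x x ≤ p x y := hp.2.2.1 x y

theorem comm (hp : IsPartialMetric p) (x y : X) : p x y = p y x := hp.2.2.2.1 x y

theorem self_le_right (hp : IsPartialMetric p) (x y : X) : p y y ≤ p x y :=
  hp.comm x y ▸ hp.self_le_left y x

theorem triangle (hp : IsPartialMetric p) (x y z : X) : p x z ≤ p x y + p y z - p y y :=
  hp.2.2.2.2 x y z

theorem self_add_self_lt_two_mul {x y : X} (hp : IsPartialMetric p) (hxy : x ≠ y) :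
    p x x + p y y < 2 * p x y := by
  have hx := hp.self_le_left x y
  have hy := hp.self_le_right x y
  by_contra! hle
  exact hxy ((hp.2.1 x y).2 ⟨by linarith, by linarith⟩)

end IsPartialMetric

namespace gMetricOf

variable {X : Type*} {p : X → X → ℝ}

theorem self (x : X) : gMetricOf p x x x = 0 := by
  unfold gMetricOf; ring

theorem left_left (x y : X) : gMetricOf p x x y = 2 * p x y - p x x - p y y := by
  unfold gMetricOf; ring

theorem swap_left (hp : IsPartialMetric p) (x y z : X) :
    gMetricOf p x y z = gMetricOf p y x z := by
  unfold gMetricOf; rw [hp.comm x y, hp.comm y z, hp.comm x z]; ring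

theorem swap_right (hp : IsPartialMetric p) (x y z : X) :
    gMetricOf p x y z = gMetricOf p x z y := by
  unfold gMetricOf; rw [hp.comm y z]; ring

theorem left_right_right (hp : IsPartialMetric p) (x y : X) :
    gMetricOf p x y y = gMetricOf p y x x := by
  unfold gMetricOf; rw [hp.comm x y]; ring

theorem pos_of_ne (hp : IsPartialMetric p) {x y : X} (hxy : x ≠ y) : 0 < gMetricOf p x x y := by
  rw [left_left]; linarith [hp.self_add_self_lt_two_mul hxy]

theorem left_left_le (hp : IsPartialMetric p) (x y z : X) :
    gMetricOf p x x y ≤ gMetricOf p x y z := by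
  unfold gMetricOf; linarith [hp.triangle x z y, hp.comm z y]

theorem nonneg (hp : IsPartialMetric p) (x y z : X) : 0 ≤ gMetricOf p x y z := by
  have : 0 ≤ gMetricOf p x x y := by
    rw [left_left]; linarith [hp.self_le_left x y, hp.self_le_right x y]
  exact this.trans (left_left_le hp x y z)

theorem le_add (hp : IsPartialMetric p) (x y z a : X) :
    gMetricOf p x y z ≤ gMetricOf p x a a + gMetricOf p a y z := by
  unfold gMetricOf; linarith [hp.triangle x a y, hp.triangle x a z]

end gMetricOf

theorem IsPartialMetric.isGMetric_gMetricOf {X : Type*} {p : X → X → ℝ} (hp : IsPartialMetric p) :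
    IsGMetric (gMetricOf p) :=
  ⟨gMetricOf.nonneg hp, gMetricOf.self, fun _ _ => gMetricOf.pos_of_ne hp,
    fun x y z _ => gMetricOf.left_left_le hp x y z,
    fun x y z => ⟨gMetricOf.swap_left hp x y z, gMetricOf.swap_right hp x y z⟩,
    gMetricOf.le_add hp⟩

theorem stmt_0 {X : Type*} (p : X → X → ℝ) (hp : IsPartialMetric p)
    (Gp : X → X → X → ℝ)
    (hGp : ∀ x y z, Gp x y z = p x y + p y z + p x z - p x x - p y y - p z z) :
    IsGMetric Gp ∧ ∀ x y, Gp x y y = Gp y x x := by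
  obtain rfl : Gp = gMetricOf p := funext fun x => funext fun y => funext (hGp x y)
  exact ⟨hp.isGMetric_gMetricOf, gMetricOf.left_right_right hp⟩
end

section
/- Let (X, p) be a partial metric space and G_p its associated G-metric defined by G_p(x,y,z) = p(x,y) + p(y,z) + p(x,z) - p(x,x) - p(y,y) - p(z,z). Then a sequence {x_n} in X is Cauchy in (X, p) if and only if it is G-Cauchy in (X, G_p). -/
open Filter Topology

/-
Put `d x y := 2 p(x, y) - p(x, x) - p(y, y) = G_p(x, y, y)`. If `p(x_n, x_m) → a`, the six terms of
`G_p(x_n, x_m, x_l)` all tend to `a` and cancel. Conversely, since `p(x, x)` and `p(y, y)` are both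
at most `p(x, y)`, the quantity `d x y` dominates `|p(x, x) - p(y, y)|` and `|p(x, y) - p(x, x)|`; so a
G-Cauchy sequence has Cauchy self-distances `p(x_n, x_n) → a`, and then `p(x_n, x_m) → a` as well.
-/

theorem tendsto_atTop_nat_prod_iff {f : ℕ × ℕ → ℝ} {a : ℝ} :
    Tendsto f atTop (𝓝 a) ↔ ∀ ε > 0, ∃ N, ∀ n ≥ N, ∀ m ≥ N, |f (n, m) - a| < ε := by
  simp only [Metric.tendsto_atTop, Real.dist_eq]
  refine forall₂_congr fun ε _ => ⟨fun ⟨N, hN⟩ => ?_, fun ⟨N, hN⟩ => ?_⟩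
  · exact ⟨N.1 ⊔ N.2, fun n hn m hm => hN (n, m) ⟨le_sup_left.trans hn, le_sup_right.trans hm⟩⟩
  · exact ⟨(N, N), fun nm hnm => hN nm.1 hnm.1 nm.2 hnm.2⟩

section

variable {X : Type*} {p : X → X → ℝ} {G : X → X → X → ℝ} {s : ℕ → X}

theorem gCauchy_of_pCauchy
    (hG : ∀ x y z, G x y z = p x y + p y z + p x z - p x x - p y y - p z z) (hs : PCauchy p s) :
    GCauchy G s := by
  obtain ⟨a, ha⟩ := hs
  intro ε hε
  obtain ⟨N, hN⟩ := tendsto_atTop_nat_prod_iff.1 ha (ε / 6) (by positivity)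
  refine ⟨N, fun n hn m hm l hl => ?_⟩
  have hnm := abs_lt.1 (hN n hn m hm)
  have hml := abs_lt.1 (hN m hm l hl)
  have hnl := abs_lt.1 (hN n hn l hl)
  have hnn := abs_lt.1 (hN n hn n hn)
  have hmm := abs_lt.1 (hN m hm m hm)
  have hll := abs_lt.1 (hN l hl l hl)
  rw [hG]
  linarith [hnm.2, hml.2, hnl.2, hnn.1, hmm.1, hll.1]

theorem exists_two_mul_sub_lt_of_gCauchy
    (hG : ∀ x y z, G x y z = p x y + p y z + p x z - p x x - p y y - p z z) (hs : GCauchy G s) {ε : ℝ} (hε : 0 < ε) :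
    ∃ k, ∀ n ≥ k, ∀ m ≥ k, 2 * p (s n) (s m) - p (s n) (s n) - p (s m) (s m) < ε := by
  obtain ⟨k, hk⟩ := hs ε hε
  refine ⟨k, fun n hn m hm => ?_⟩
  have h := hk n hn m hm m hm
  rw [hG] at h
  linarith

theorem IsPartialMetric.symm (hp : IsPartialMetric p) (x y : X) : p x y = p y x :=
  hp.2.2.2.1 x y

theorem IsPartialMetric.self_le_left_s1 (hp : IsPartialMetric p) (x y : X) : p x x ≤ p x y :=
  hp.2.2.1 x y

theorem IsPartialMetric.self_le_right_s1 (hp : IsPartialMetric p) (x y : X) : p y y ≤ p x y :=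
  hp.symm x y ▸ hp.self_le_left_s1 y x

theorem IsPartialMetric.abs_sub_self_le (hp : IsPartialMetric p) (x y : X) :
    |p x y - p x x| ≤ 2 * p x y - p x x - p y y := by
  rw [abs_of_nonneg (sub_nonneg.2 (hp.self_le_left_s1 x y))]
  linarith [hp.self_le_right_s1 x y]

theorem IsPartialMetric.abs_self_sub_self_le (hp : IsPartialMetric p) (x y : X) :
    |p x x - p y y| ≤ 2 * p x y - p x x - p y y := by
  rw [abs_le]
  constructor <;> linarith [hp.self_le_left_s1 x y, hp.self_le_right_s1 x y]

theorem IsPartialMetric.cauchySeq_self_of_gCauchy (hp : IsPartialMetric p)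
    (hG : ∀ x y z, G x y z = p x y + p y z + p x z - p x x - p y y - p z z) (hs : GCauchy G s) :
    CauchySeq fun n => p (s n) (s n) := by
  refine Metric.cauchySeq_iff.2 fun ε hε => ?_
  obtain ⟨k, hk⟩ := exists_two_mul_sub_lt_of_gCauchy hG hs hε
  exact ⟨k, fun n hn m hm => (hp.abs_self_sub_self_le _ _).trans_lt (hk n hn m hm)⟩

theorem IsPartialMetric.pCauchy_of_gCauchy (hp : IsPartialMetric p)
    (hG : ∀ x y z, G x y z = p x y + p y z + p x z - p x x - p y y - p z z) (hs : GCauchy G s) :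
    PCauchy p s := by
  obtain ⟨a, ha⟩ := cauchySeq_tendsto_of_complete (hp.cauchySeq_self_of_gCauchy hG hs)
  refine ⟨a, tendsto_atTop_nat_prod_iff.2 fun ε hε => ?_⟩
  obtain ⟨k₁, hk₁⟩ := exists_two_mul_sub_lt_of_gCauchy hG hs (half_pos hε)
  obtain ⟨k₂, hk₂⟩ := Metric.tendsto_atTop.1 ha (ε / 2) (half_pos hε)
  refine ⟨k₁ ⊔ k₂, fun n hn m hm => ?_⟩
  have hnm := (hp.abs_sub_self_le (s n) (s m)).trans_lt
    (hk₁ n (le_sup_left.trans hn) m (le_sup_left.trans hm))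
  have hn : |p (s n) (s n) - a| < ε / 2 := hk₂ n (le_sup_right.trans hn)
  calc |p (s n) (s m) - a|
      ≤ |p (s n) (s m) - p (s n) (s n)| + |p (s n) (s n) - a| := abs_sub_le _ _ _
    _ < ε / 2 + ε / 2 := add_lt_add hnm hn
    _ = ε := add_halves ε

end

theorem stmt_1 {X : Type*} (p : X → X → ℝ) (hp : IsPartialMetric p)
    (Gp : X → X → X → ℝ)
    (hGp : ∀ x y z, Gp x y z = p x y + p y z + p x z - p x x - p y y - p z z)
    (s : ℕ → X) :
    PCauchy p s ↔ GCauchy Gp s :=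
  ⟨gCauchy_of_pCauchy hGp, hp.pCauchy_of_gCauchy hGp⟩
end

section
/- Let (X, GP) be a GP-metric space. Define G_GP(x,y,z) = GP(x,y,y) + GP(x,z,z) + GP(y,z,z) - GP(x,x,x) - GP(y,y,y) - GP(z,z,z). Then (X, G_GP) is a symmetric G-metric space. -/
open Filter Topology

/-! `(x, y) ↦ GP(x,y,y)` is a partial metric `p`, and `G_GP` is the G-metric
`p(x,y) + p(x,z) + p(y,z) - p(x,x) - p(y,y) - p(z,z)` built from it. For any partial metric this
expression is a symmetric G-metric: its rectangle inequality is the sum of two triangle inequalities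
of `p` through the middle point `a`. -/

def gOfPartial {X : Type*} (p : X → X → ℝ) (x y z : X) : ℝ :=
  p x y + p x z + p y z - p x x - p y y - p z z

section PartialMetric

variable {X : Type*} {p : X → X → ℝ}

theorem gOfPartial_apply_symm (hp : ∀ x y, p x y = p y x) (x y : X) :
    gOfPartial p x y y = gOfPartial p y x x := by
  simp only [gOfPartial, hp y x]
  ring

theorem IsPartialMetric.isGMetric_gOfPartial (hp : IsPartialMetric p) :
    IsGMetric (gOfPartial p) := by
  obtain ⟨nonneg, eq_iff, self_le, symm, triangle⟩ := hp
  refine ⟨fun x y z => ?_, fun x => ?_, fun x y hxy => ?_, fun x y z _ => ?_,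
    fun x y z => ⟨?_, ?_⟩, fun x y z a => ?_⟩ <;> simp only [gOfPartial]
  · linarith [self_le x y, self_le y z, self_le z x, symm z x]
  · ring
  · by_contra! h
    have hx := self_le x y
    have hy := self_le y x
    rw [symm y x] at hy
    exact hxy ((eq_iff x y).2 ⟨by linarith, by linarith⟩)
  · linarith [triangle x z y, symm y z, nonneg x x]
  · linarith [symm x y]
  · linarith [symm y z]
  · linarith [triangle x a y, triangle x a z]

end PartialMetric

namespace IsGPMetric

variable {X : Type*} {G : X → X → X → ℝ}

/-- GP1 with `z = y` gives `GP(x,x,y) ≤ GP(x,y,y)`, and the same with `x, y` exchanged is the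
reverse inequality up to permuting arguments. -/
theorem apply_swap (hG : IsGPMetric G) (x y : X) : G x y y = G y x x := by
  obtain ⟨-, mono, swap, -⟩ := hG
  have hxy := (mono x y y).2
  have hyx := (mono y x x).2
  rw [(swap _ _ _).2, (swap _ _ _).1] at hxy hyx
  linarith

theorem isPartialMetric (hG : IsGPMetric G) : IsPartialMetric fun x y => G x y y := by
  have symm := hG.apply_swap
  obtain ⟨nonneg, mono, -, triangle, eq_of_eq⟩ := hG
  refine ⟨fun x y => nonneg x y y, fun x y => ⟨?_, fun ⟨hx, hy⟩ => ?_⟩,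
    fun x y => (mono x y y).1.trans (mono x y y).2, symm, fun x y z => triangle x z z y⟩
  · rintro rfl
    exact ⟨rfl, rfl⟩
  · exact (eq_of_eq x y y hx.symm hy hy).1

end IsGPMetric

theorem stmt_11 {X : Type*} (G : X → X → X → ℝ) (hG : IsGPMetric G)
    (GG : X → X → X → ℝ)
    (hGG : ∀ x y z, GG x y z =
      G x y y + G x z z + G y z z - G x x x - G y y y - G z z z) :
    IsGMetric GG ∧ ∀ x y, GG x y y = GG y x x := by
  obtain rfl : GG = gOfPartial fun x y => G x y y := funext fun x => funext fun y => funext (hGG x y)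
  exact ⟨hG.isPartialMetric.isGMetric_gOfPartial, gOfPartial_apply_symm hG.apply_swap⟩
end

section
/- Let (X, GP) be a GP-metric space with associated G-metric G_GP(x,y,z) = GP(x,y,y)+GP(x,z,z)+GP(y,z,z)-GP(x,x,x)-GP(y,y,y)-GP(z,z,z). Then a sequence is GP-Cauchy in (X, GP) if and only if it is G-Cauchy in (X, G_GP), and (X, GP) is GP-complete if and only if (X, G_GP) is G-complete. -/
/-!
Write `w x = G x x x`. The GP-axioms give `max (w x) (w y) ≤ G x y y`, so the associated G-metric
satisfies `G_GP(x, y, y) = 2 G x y y - w x - w y ≥ |w x - w y|`. Hence a G-Cauchy sequence has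
convergent self-distances `w (s n) → a`, and then `G (s n) (s m) (s m) → a` as well; conversely
`G_GP(s n, s m, s l)` is a signed sum of six terms `G (s i) (s j) (s j)` that all tend to the same
limit. For completeness, `G_GP(x, s n, s n) → 0` forces `G x (s n) (s n) → (w x + a) / 2`, and the
two lower bounds `w x, w (s n) ≤ G x (s n) (s n)` pin this down to `a = w x`.
-/

open Filter Topology

section IndexLimits

variable {α β : Type*} [Preorder α] [Preorder β]

theorem Filter.tendsto_fst_atTop : Tendsto (Prod.fst : α × β → α) atTop atTop := by
  rw [← prod_atTop_atTop_eq]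
  exact tendsto_fst

theorem Filter.tendsto_snd_atTop : Tendsto (Prod.snd : α × β → β) atTop atTop := by
  rw [← prod_atTop_atTop_eq]
  exact tendsto_snd

theorem Filter.Tendsto.prodMk_atTop {ι : Type*} {l : Filter ι} {i : ι → α} {j : ι → β}
    (hi : Tendsto i l atTop) (hj : Tendsto j l atTop) :
    Tendsto (fun x => (i x, j x)) l atTop := by
  rw [← prod_atTop_atTop_eq]
  exact hi.prodMk hj

end IndexLimits

section GMetricLimits

variable {X : Type*} {G : X → X → X → ℝ} {s : ℕ → X}

theorem gCauchy_of_tendsto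
    (h : Tendsto (fun p : ℕ × ℕ × ℕ => G (s p.1) (s p.2.1) (s p.2.2)) atTop (𝓝 0)) :
    GCauchy G s := by
  intro ε hε
  obtain ⟨⟨a, b, c⟩, hN⟩ := eventually_atTop.1 (h.eventually (gt_mem_nhds hε))
  refine ⟨max a (max b c), fun n hn m hm l hl => hN (n, m, l) ⟨?_, ?_, ?_⟩⟩ <;> grind

theorem GCauchy.tendsto_zero (h0 : ∀ x y z, 0 ≤ G x y z) (h : GCauchy G s) :
    Tendsto (fun p : ℕ × ℕ × ℕ => G (s p.1) (s p.2.1) (s p.2.2)) atTop (𝓝 0) := by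
  refine tendsto_order.2 ⟨fun a ha => .of_forall fun p => ha.trans_le (h0 _ _ _), fun ε hε => ?_⟩
  obtain ⟨k, hk⟩ := h ε hε
  exact eventually_atTop.2 ⟨(k, k, k), fun p hp => hk _ hp.1 _ hp.2.1 _ hp.2.2⟩

theorem gConvergesTo_of_tendsto {x : X}
    (h : Tendsto (fun p : ℕ × ℕ => G x (s p.1) (s p.2)) atTop (𝓝 0)) :
    GConvergesTo G s x := by
  intro ε hε
  obtain ⟨⟨a, b⟩, hN⟩ := eventually_atTop.1 (h.eventually (gt_mem_nhds hε))
  refine ⟨max a b, fun n hn m hm => hN (n, m) ⟨?_, ?_⟩⟩ <;> grind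

theorem GConvergesTo.tendsto_diag_zero (h0 : ∀ x y z, 0 ≤ G x y z) {x : X}
    (h : GConvergesTo G s x) : Tendsto (fun n => G x (s n) (s n)) atTop (𝓝 0) := by
  refine tendsto_order.2 ⟨fun a ha => .of_forall fun n => ha.trans_le (h0 _ _ _), fun ε hε => ?_⟩
  obtain ⟨k, hk⟩ := h ε hε
  exact eventually_atTop.2 ⟨k, fun n hn => hk n hn n hn⟩

end GMetricLimits

def assocGMetric {X : Type*} (G : X → X → X → ℝ) (x y z : X) : ℝ :=
  G x y y + G x z z + G y z z - G x x x - G y y y - G z z z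

theorem assocGMetric_apply_self_self {X : Type*} (G : X → X → X → ℝ) (x y : X) :
    assocGMetric G x y y = 2 * G x y y - G x x x - G y y y := by
  unfold assocGMetric
  ring

theorem GPCauchy.gCauchy_assocGMetric {X : Type*} {G : X → X → X → ℝ} {s : ℕ → X}
    (h : GPCauchy G s) : GCauchy (assocGMetric G) s := by
  obtain ⟨a, ha⟩ := h
  have hpair {i j : ℕ × ℕ × ℕ → ℕ} (hi : Tendsto i atTop atTop) (hj : Tendsto j atTop atTop) :
      Tendsto (fun p => G (s (i p)) (s (j p)) (s (j p))) atTop (𝓝 a) :=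
    ha.comp (hi.prodMk_atTop hj)
  have h1 : Tendsto (fun p : ℕ × ℕ × ℕ => p.1) atTop atTop := tendsto_fst_atTop
  have h2 : Tendsto (fun p : ℕ × ℕ × ℕ => p.2.1) atTop atTop :=
    tendsto_fst_atTop.comp tendsto_snd_atTop
  have h3 : Tendsto (fun p : ℕ × ℕ × ℕ => p.2.2) atTop atTop :=
    tendsto_snd_atTop.comp tendsto_snd_atTop
  refine gCauchy_of_tendsto ?_
  convert (((((hpair h1 h2).add (hpair h1 h3)).add (hpair h2 h3)).sub (hpair h1 h1)).sub
    (hpair h2 h2)).sub (hpair h3 h3) using 2 with p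
  · rfl
  · ring

namespace IsGPMetric

variable {X : Type*} {G : X → X → X → ℝ}

theorem apply_self_self_comm (hG : IsGPMetric G) (x y : X) : G x y y = G y y x := by
  rw [(hG.2.2.1 x y y).1, (hG.2.2.1 y x y).2]

theorem apply_self_le (hG : IsGPMetric G) (x y : X) : G x x y ≤ G x y y :=
  (hG.2.1 x y y).2

theorem diag_le_apply_self (hG : IsGPMetric G) (x y : X) : G x x x ≤ G x x y :=
  (hG.2.1 x y y).1

theorem diag_le_left (hG : IsGPMetric G) (x y : X) : G x x x ≤ G x y y :=
  (hG.diag_le_apply_self x y).trans (hG.apply_self_le x y)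

theorem diag_le_right (hG : IsGPMetric G) (x y : X) : G y y y ≤ G x y y :=
  hG.apply_self_self_comm x y ▸ (hG.2.1 y y x).2

theorem apply_le_two_mul_sub (hG : IsGPMetric G) (x y : X) :
    G x y y ≤ 2 * G x x y - G x x x := by
  have htri := hG.2.2.2.1 y y x x
  rw [(hG.2.2.1 y x x).1, (hG.2.2.1 x y x).2, ← hG.apply_self_self_comm x y] at htri
  linarith

theorem abs_diag_sub_le_assocGMetric (hG : IsGPMetric G) (x y : X) :
    |G x x x - G y y y| ≤ assocGMetric G x y y := by
  rw [assocGMetric_apply_self_self, abs_le]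
  constructor <;> linarith [hG.diag_le_left x y, hG.diag_le_right x y]

theorem assocGMetric_nonneg (hG : IsGPMetric G) (x y z : X) : 0 ≤ assocGMetric G x y z := by
  unfold assocGMetric
  linarith [hG.diag_le_left x y, hG.diag_le_right x y, hG.diag_le_left x z,
    hG.diag_le_right x z, hG.diag_le_left y z, hG.diag_le_right y z]

theorem tendsto_apply_self_self {s : ℕ → X} {x : X} (hG : IsGPMetric G)
    (h : Tendsto (fun n => G x x (s n)) atTop (𝓝 (G x x x))) :
    Tendsto (fun n => G x (s n) (s n)) atTop (𝓝 (G x x x)) := by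
  have hupper : Tendsto (fun n => 2 * G x x (s n) - G x x x) atTop (𝓝 (G x x x)) := by
    simpa [two_mul] using (h.const_mul 2).sub_const (G x x x)
  exact tendsto_of_tendsto_of_tendsto_of_le_of_le h hupper (fun n => hG.apply_self_le x (s n))
    (fun n => hG.apply_le_two_mul_sub x (s n))

theorem gpCauchy_of_gCauchy (hG : IsGPMetric G) {s : ℕ → X}
    (h : GCauchy (assocGMetric G) s) : GPCauchy G s := by
  have hidx : Tendsto (fun p : ℕ × ℕ => (p.1, p.2, p.2)) atTop atTop :=
    tendsto_fst_atTop.prodMk_atTop (tendsto_snd_atTop.prodMk_atTop tendsto_snd_atTop)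
  have hpair : Tendsto (fun p : ℕ × ℕ => assocGMetric G (s p.1) (s p.2) (s p.2)) atTop (𝓝 0) :=
    -- the ascription makes `comp` elaborate before unifying with the stated function
    ((h.tendsto_zero hG.assocGMetric_nonneg).comp hidx :)
  have hdiag : CauchySeq fun n => G (s n) (s n) (s n) :=
    cauchySeq_iff_tendsto_dist_atTop_0.2 <| squeeze_zero (fun _ => dist_nonneg)
      (fun p => (Real.dist_eq _ _).trans_le (hG.abs_diag_sub_le_assocGMetric _ _)) hpair
  obtain ⟨a, ha⟩ := cauchySeq_tendsto_of_complete hdiag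
  refine ⟨a, ?_⟩
  convert ((hpair.add (ha.comp tendsto_fst_atTop)).add (ha.comp tendsto_snd_atTop)).div_const 2
    using 2 with p
  · simp only [Function.comp_apply, assocGMetric_apply_self_self]
    ring
  · ring

theorem gComplete_of_gpComplete (hG : IsGPMetric G) (h : GPComplete G) :
    GComplete (assocGMetric G) := by
  intro s hs
  obtain ⟨x, ⟨hdiag, hxx⟩, hpair⟩ := h s (hG.gpCauchy_of_gCauchy hs)
  have hx := hG.tendsto_apply_self_self hxx
  refine ⟨x, gConvergesTo_of_tendsto ?_⟩
  convert (((((hx.comp tendsto_fst_atTop).add (hx.comp tendsto_snd_atTop)).add hpair).sub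
    (tendsto_const_nhds (x := G x x x))).sub (hdiag.comp tendsto_fst_atTop)).sub
    (hdiag.comp tendsto_snd_atTop) using 2 with p
  · simp only [assocGMetric, Function.comp_apply]
  · ring

theorem gpComplete_of_gComplete (hG : IsGPMetric G) (h : GComplete (assocGMetric G)) :
    GPComplete G := by
  intro s ⟨a, ha⟩
  obtain ⟨x, hx⟩ := h s (GPCauchy.gCauchy_assocGMetric ⟨a, ha⟩)
  have hdiag : Tendsto (fun n => G (s n) (s n) (s n)) atTop (𝓝 a) :=
    ha.comp tendsto_atTop_diagonal
  have hmid : Tendsto (fun n => G x (s n) (s n)) atTop (𝓝 ((G x x x + a) / 2)) := by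
    convert (((hx.tendsto_diag_zero hG.assocGMetric_nonneg).add tendsto_const_nhds).add
      hdiag).div_const 2 using 2 with n
    · rw [assocGMetric_apply_self_self]
      ring
    · ring
  have hxa : G x x x ≤ (G x x x + a) / 2 := ge_of_tendsto' hmid fun n => hG.diag_le_left x (s n)
  have hax : a ≤ (G x x x + a) / 2 :=
    le_of_tendsto_of_tendsto' hdiag hmid fun n => hG.diag_le_right x (s n)
  obtain rfl : a = G x x x := by linarith
  rw [add_self_div_two] at hmid
  refine ⟨x, ⟨hdiag, ?_⟩, ha⟩
  exact tendsto_of_tendsto_of_tendsto_of_le_of_le tendsto_const_nhds hmid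
    (fun n => hG.diag_le_apply_self x (s n)) (fun n => hG.apply_self_le x (s n))

end IsGPMetric

theorem stmt_12 {X : Type*} (G : X → X → X → ℝ) (hG : IsGPMetric G)
    (GG : X → X → X → ℝ)
    (hGG : ∀ x y z, GG x y z =
      G x y y + G x z z + G y z z - G x x x - G y y y - G z z z) :
    (∀ s : ℕ → X, GPCauchy G s ↔ GCauchy GG s) ∧
    (GPComplete G ↔ GComplete GG) := by
  obtain rfl : GG = assocGMetric G := funext fun x => funext fun y => funext (hGG x y)
  exact ⟨fun s => ⟨GPCauchy.gCauchy_assocGMetric, hG.gpCauchy_of_gCauchy⟩,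
    hG.gComplete_of_gpComplete, hG.gpComplete_of_gComplete⟩
end
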